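/- arXiv:1809.04818 — 4 statements merged into one kernel-verified Lean document; each statement's English description precedes it below -/
import Mathlib

section
/- Let $x_1,\dots,x_k \ge 0$ be nonnegative reals and $2n$ a nonnegative even integer. Then the sum over all $k$-tuples of nonnegative even integers $(2m_1,\dots,2m_k)$ with $2m_1+\cdots+2m_k = 2n$ of $\binom{2n}{2m_1,\dots,2m_k} x_1^{2m_1}\cdots x_k^{2m_k}$ is at least $\frac{1}{2^{k-1}}\left(\sum_{i=1}^k x_i\right)^{2n}$. -/
open Finset

/-- **Even-multinomial inequality.** For nonnegative reals `x₁, …, x_k` and a nonnegative even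
integer `2n`, the sum over all `k`-tuples of nonnegative even integers `(2m₁, …, 2m_k)` with
`2m₁ + ⋯ + 2m_k = 2n` of `(2n)! / ((2m₁)! ⋯ (2m_k)!) · x₁^{2m₁} ⋯ x_k^{2m_k}` is at least
`2^{-(k-1)} (∑ xᵢ)^{2n}`. -/
theorem stmt_0 (k n : ℕ) (x : Fin k → ℝ) (hx : ∀ i, 0 ≤ x i) :
    (1 / 2 ^ (k - 1)) * (∑ i, x i) ^ (2 * n) ≤
      ∑ m ∈ Finset.Nat.antidiagonalTuple k n,
        (Nat.multinomial Finset.univ (fun i => 2 * m i) : ℝ) *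
          ∏ i, x i ^ (2 * m i) := by
  rcases Nat.eq_zero_or_pos k with hk | hk
  · subst hk
    cases n with
    | zero => simp
    | succ n => simp [Nat.antidiagonalTuple_zero_succ]
  set g : (Fin k → ℕ) → ℝ := fun m => (Nat.multinomial Finset.univ m : ℝ) * ∏ i, x i ^ m i
    with hg
  have hg0 : ∀ m, 0 ≤ g m := fun m =>
    mul_nonneg (Nat.cast_nonneg _) (prod_nonneg fun i _ => pow_nonneg (hx i) _)
  set s : Bool → ℝ := fun b => if b then 1 else -1 with hs
  have hinj : Function.Injective (fun (m : Fin k → ℕ) (i : Fin k) => 2 * m i) := by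
    intro a b h
    funext i
    have h2 : 2 * a i = 2 * b i := congr_fun h i
    omega
  set E : Finset (Fin k → ℕ) := (Finset.piAntidiag Finset.univ n).map ⟨_, hinj⟩ with hE
  have key : ∑ ε : Fin k → Bool, (∑ i, s (ε i) * x i) ^ (2*n)
      = 2^k * ∑ m ∈ Finset.Nat.antidiagonalTuple k n, g (fun i => 2 * m i) := by
    have expand : ∀ ε : Fin k → Bool, (∑ i, s (ε i) * x i) ^ (2*n)
        = ∑ m ∈ Finset.piAntidiag Finset.univ (2*n),
            (∏ i, s (ε i) ^ m i) * g m := by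
      intro ε
      rw [Finset.sum_pow_eq_sum_piAntidiag]
      refine Finset.sum_congr rfl fun m hm => ?_
      rw [hg]
      simp only [mul_pow, Finset.prod_mul_distrib]
      ring
    simp_rw [expand]
    rw [Finset.sum_comm]
    have inner : ∀ m : Fin k → ℕ,
        ∑ ε : Fin k → Bool, ∏ i, s (ε i) ^ m i
          = if ∀ i, Even (m i) then (2:ℝ)^k else 0 := by
      intro m
      have h1 : ∑ ε : Fin k → Bool, ∏ i, s (ε i) ^ m i
          = ∏ i, ∑ b : Bool, s b ^ m i := by
        rw [Finset.prod_univ_sum]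
        rw [Fintype.piFinset_univ]
      rw [h1]
      have h2 : ∀ i, ∑ b : Bool, s b ^ m i = if Even (m i) then (2:ℝ) else 0 := by
        intro i
        rw [hs]
        rcases Nat.even_or_odd (m i) with h | h
        · simp [Fintype.sum_bool, h.neg_one_pow, h]
        · simp [Fintype.sum_bool, h.neg_one_pow, h, Nat.not_even_iff_odd.2 h]
      simp_rw [h2]
      by_cases hall : ∀ i, Even (m i)
      · rw [if_pos hall, Finset.prod_congr rfl (fun i _ => if_pos (hall i)),
          Finset.prod_const, Finset.card_univ, Fintype.card_fin]
      · push_neg at hall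
        obtain ⟨i, hi⟩ := hall
        rw [if_neg (by push_neg; exact ⟨i, hi⟩)]
        exact Finset.prod_eq_zero (Finset.mem_univ i) (if_neg hi)
    simp_rw [← Finset.sum_mul, inner]
    have hEsub : E ⊆ Finset.piAntidiag Finset.univ (2*n) := by
      intro m hm
      rw [hE, Finset.mem_map] at hm
      obtain ⟨a, ha, rfl⟩ := hm
      rw [Finset.mem_piAntidiag] at ha ⊢
      refine ⟨?_, fun i _ => Finset.mem_univ i⟩
      simp only [Function.Embedding.coeFn_mk]
      rw [← Finset.mul_sum, ha.1]
    have hstep : ∑ m ∈ Finset.piAntidiag Finset.univ (2*n),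
          (if ∀ i, Even (m i) then (2:ℝ)^k else 0) * g m
        = ∑ m ∈ E, (2:ℝ)^k * g m := by
      rw [← Finset.sum_subset hEsub]
      · refine Finset.sum_congr rfl fun m hm => ?_
        rw [hE, Finset.mem_map] at hm
        obtain ⟨a, ha, rfl⟩ := hm
        rw [if_pos fun i => by simpa using even_two_mul (a i)]
      · intro m hm hmE
        rw [if_neg, zero_mul]
        intro hall
        apply hmE
        rw [hE, Finset.mem_map]
        refine ⟨fun i => m i / 2, ?_, ?_⟩
        · rw [Finset.mem_piAntidiag] at hm ⊢
          refine ⟨?_, fun i _ => Finset.mem_univ i⟩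
          have h3 : ∑ i, 2 * (m i / 2) = ∑ i, m i := by
            refine Finset.sum_congr rfl fun i _ => ?_
            obtain ⟨c, hc⟩ := hall i; omega
          rw [← Finset.mul_sum] at h3
          have h4 : ∑ i, m i = 2 * n := hm.1
          omega
        · funext i
          obtain ⟨c, hc⟩ := hall i
          simp only [Function.Embedding.coeFn_mk]
          omega
    rw [hstep, ← Finset.mul_sum, hE, Finset.sum_map,
      ← Finset.piAntidiag_univ_fin_eq_antidiagonalTuple n k]
    rfl
  -- lower bound on the sign sum
  have hterm : ∀ ε : Fin k → Bool, (0:ℝ) ≤ (∑ i, s (ε i) * x i) ^ (2*n) :=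
    fun ε => (even_two_mul n).pow_nonneg _
  have hne : (fun _ : Fin k => true) ≠ (fun _ : Fin k => false) := by
    intro h
    exact absurd (congr_fun h ⟨0, hk⟩) (by simp)
  have hlow : 2 * (∑ i, x i) ^ (2*n) ≤ ∑ ε : Fin k → Bool, (∑ i, s (ε i) * x i) ^ (2*n) := by
    have hsub : ({fun _ => true, fun _ => false} : Finset (Fin k → Bool)) ⊆ Finset.univ :=
      Finset.subset_univ _
    have h5 := Finset.sum_le_sum_of_subset_of_nonneg hsub (fun ε _ _ => hterm ε)
    rw [Finset.sum_pair hne] at h5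
    refine le_trans (le_of_eq ?_) h5
    have e1 : (∑ i, s true * x i) = ∑ i, x i := by simp [hs]
    have e2 : (∑ i, s false * x i) = -∑ i, x i := by simp [hs]
    rw [e1, e2, (even_two_mul n).neg_pow]
    ring
  have hgoal : ∑ m ∈ Finset.Nat.antidiagonalTuple k n,
        (Nat.multinomial Finset.univ (fun i => 2 * m i) : ℝ) * ∏ i, x i ^ (2 * m i)
      = ∑ m ∈ Finset.Nat.antidiagonalTuple k n, g (fun i => 2 * m i) := rfl
  rw [hgoal]
  set S := ∑ m ∈ Finset.Nat.antidiagonalTuple k n, g (fun i => 2 * m i) with hS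
  rw [key] at hlow
  have h2 : (2:ℝ)^k = 2 * 2^(k-1) := by
    rw [← pow_succ']
    congr 1
    omega
  rw [h2, mul_assoc] at hlow
  have hS2 : (∑ i, x i)^(2*n) ≤ 2^(k-1) * S :=
    le_of_mul_le_mul_left hlow two_pos
  rw [div_mul_eq_mul_div, one_mul, div_le_iff₀ (by positivity)]
  linarith
end

section
/- Define polynomials $p^{(r)}$ by the recursion $p^{(r)}(x) = x\, p^{(r-1)}(x) - (d-1)\, p^{(r-2)}(x)$ with base cases $p^{(0)}(x) = 1$ and $p^{(1)}(x) = x + 1$, where $d \ge 3$ is fixed. Then for all real $x$ with $|x| < 2\sqrt{d-1}$ and all $r \ge 0$, writing $\theta = \arccos\left(\frac{x/2}{\sqrt{d-1}}\right)$, we have $p^{(r)}(x) = (d-1)^{r/2}\left(\cos(r\theta) + \frac{\sin(r\theta)}{\sqrt{d-1}\,\sin\theta} + \frac{\cos\theta \sin(r\theta)}{\sin\theta}\right)$. -/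
/-- The polynomials `p^{(r)}` (as functions of `x`, with parameter `d`): `p⁰ = 1`,
`p¹ = x + 1`, `p^{(r)} = x p^{(r-1)} - (d-1) p^{(r-2)}`. -/
def pRec (d : ℝ) : ℕ → ℝ → ℝ
  | 0 => fun _ => 1
  | 1 => fun x => x + 1
  | (n + 2) => fun x => x * pRec d (n + 1) x - (d - 1) * pRec d n x

/-- **Closed form for `p^{(r)}`.** For `d ≥ 3` and `|x| < 2√(d-1)`, with
`θ = arccos((x/2)/√(d-1))`:
`p^{(r)}(x) = (d-1)^{r/2} (cos(rθ) + sin(rθ)/(√(d-1) sin θ) + cos θ sin(rθ)/sin θ)`. -/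
theorem stmt_10 (d : ℕ) (hd : 3 ≤ d) (x : ℝ)
    (hx : |x| < 2 * Real.sqrt ((d : ℝ) - 1)) (r : ℕ) :
    pRec (d : ℝ) r x =
      Real.sqrt ((d : ℝ) - 1) ^ r *
        (Real.cos (r * Real.arccos ((x / 2) / Real.sqrt ((d : ℝ) - 1))) +
          Real.sin (r * Real.arccos ((x / 2) / Real.sqrt ((d : ℝ) - 1))) /
            (Real.sqrt ((d : ℝ) - 1) *
              Real.sin (Real.arccos ((x / 2) / Real.sqrt ((d : ℝ) - 1)))) +
          Real.cos (Real.arccos ((x / 2) / Real.sqrt ((d : ℝ) - 1))) *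
            Real.sin (r * Real.arccos ((x / 2) / Real.sqrt ((d : ℝ) - 1))) /
            Real.sin (Real.arccos ((x / 2) / Real.sqrt ((d : ℝ) - 1)))) := by
  set q := Real.sqrt ((d : ℝ) - 1) with hqdef
  have hd1 : (2:ℝ) ≤ (d:ℝ) - 1 := by
    have : (3:ℝ) ≤ (d:ℝ) := by exact_mod_cast hd
    linarith
  have hq2 : q ^ 2 = (d:ℝ) - 1 := Real.sq_sqrt (by linarith)
  have hqpos : 0 < q := Real.sqrt_pos.mpr (by linarith)
  set t := (x / 2) / q with htdef
  have ht : |t| < 1 := by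
    rw [htdef, abs_div, abs_div, abs_of_pos hqpos, div_div,
      div_lt_one (by positivity)]
    calc |x| < 2 * q := hx
    _ = |2| * q := by norm_num
  set θ := Real.arccos t with hθdef
  have htlt := abs_lt.mp ht
  have hc : Real.cos θ = t := Real.cos_arccos (by linarith) (by linarith)
  have hs : 0 < Real.sin θ := by
    rw [hθdef, Real.sin_arccos]
    exact Real.sqrt_pos.mpr (by nlinarith)
  have hx' : x = 2 * q * Real.cos θ := by
    rw [hc, htdef]; field_simp
  have key : ∀ n : ℕ,
      pRec (d : ℝ) n x = q ^ n * (Real.cos (n * θ) + Real.sin (n * θ) / (q * Real.sin θ)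
        + Real.cos θ * Real.sin (n * θ) / Real.sin θ) ∧
      pRec (d : ℝ) (n+1) x = q ^ (n+1) * (Real.cos ((n+1) * θ)
        + Real.sin ((n+1) * θ) / (q * Real.sin θ)
        + Real.cos θ * Real.sin ((n+1) * θ) / Real.sin θ) := by
    intro n
    induction n with
    | zero =>
      constructor
      · simp [pRec]
      · show x + 1 = _
        norm_num
        rw [hx']
        field_simp
        ring
    | succ n ih =>
      refine ⟨by exact_mod_cast ih.2, ?_⟩
      show x * pRec (d:ℝ) (n+1) x - ((d:ℝ) - 1) * pRec (d:ℝ) n x = _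
      rw [ih.1, ih.2]
      push_cast
      have e2 : ((n:ℝ) + 1 + 1) * θ = (n:ℝ) * θ + θ + θ := by ring
      have e1 : ((n:ℝ) + 1) * θ = (n:ℝ) * θ + θ := by ring
      rw [e2, e1]
      have hC : Real.cos ((n:ℝ) * θ + θ + θ)
          = 2 * Real.cos θ * Real.cos ((n:ℝ) * θ + θ) - Real.cos ((n:ℝ) * θ) := by
        simp only [Real.cos_add, Real.sin_add]
        linear_combination (-Real.cos ((n:ℝ) * θ)) * Real.sin_sq_add_cos_sq θ
      have hS : Real.sin ((n:ℝ) * θ + θ + θ)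
          = 2 * Real.cos θ * Real.sin ((n:ℝ) * θ + θ) - Real.sin ((n:ℝ) * θ) := by
        simp only [Real.cos_add, Real.sin_add]
        linear_combination (-Real.sin ((n:ℝ) * θ)) * Real.sin_sq_add_cos_sq θ
      rw [hC, hS, hx', ← hq2]
      field_simp
      ring
  exact (key r).1
end

section
/- Fix $d \ge 3$ and define polynomials $p^{(r)}$ by $p^{(0)}(x)=1$, $p^{(1)}(x)=x+1$, and $p^{(r)}(x) = x\,p^{(r-1)}(x) - (d-1)p^{(r-2)}(x)$ for $r \ge 2$. Then for all real $x$ with $|x| < 2\sqrt{d-1}$ and all $r \ge 0$: $|p^{(r)}(x)| \le (d-1)^{r/2}\left(1 + \frac{r}{\sqrt{d-1}} + r\right)$. -/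
lemma abs_sin_nat_mul_le (θ : ℝ) (n : ℕ) : |Real.sin (n * θ)| ≤ n * |Real.sin θ| := by
  induction n with
  | zero => simp
  | succ n ih =>
    have e : ((n + 1 : ℕ) : ℝ) * θ = (n : ℝ) * θ + θ := by push_cast; ring
    rw [e, Real.sin_add]
    have h1 := abs_add_le (Real.sin ((n : ℝ) * θ) * Real.cos θ)
      (Real.cos ((n : ℝ) * θ) * Real.sin θ)
    rw [abs_mul, abs_mul] at h1
    have t1 : |Real.sin ((n : ℝ) * θ)| * |Real.cos θ| ≤ |Real.sin ((n : ℝ) * θ)| :=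
      mul_le_of_le_one_right (abs_nonneg _) (Real.abs_cos_le_one θ)
    have t2 : |Real.cos ((n : ℝ) * θ)| * |Real.sin θ| ≤ 1 * |Real.sin θ| :=
      mul_le_mul_of_nonneg_right (Real.abs_cos_le_one _) (abs_nonneg _)
    push_cast
    linarith

/-- **Bound on `p^{(r)}` in the Ramanujan window.** For `d ≥ 3` and `|x| < 2√(d-1)`:
`|p^{(r)}(x)| ≤ (d-1)^{r/2} (1 + r/√(d-1) + r)`. -/
theorem stmt_11 (d : ℕ) (hd : 3 ≤ d) (x : ℝ)
    (hx : |x| < 2 * Real.sqrt ((d : ℝ) - 1)) (r : ℕ) :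
    |pRec (d : ℝ) r x| ≤
      Real.sqrt ((d : ℝ) - 1) ^ r *
        (1 + (r : ℝ) / Real.sqrt ((d : ℝ) - 1) + (r : ℝ)) := by
  set D := Real.sqrt ((d : ℝ) - 1) with hD
  have hd1 : (2 : ℝ) ≤ (d : ℝ) - 1 := by
    have : (3 : ℝ) ≤ (d : ℝ) := by exact_mod_cast hd
    linarith
  have hDpos : 0 < D := Real.sqrt_pos.mpr (by linarith)
  have h2D : (0 : ℝ) < 2 * D := by linarith
  have hD2 : D ^ 2 = (d : ℝ) - 1 := Real.sq_sqrt (by linarith)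
  have hy1 : |x / (2 * D)| < 1 := by
    rw [abs_div, abs_of_pos h2D, div_lt_one h2D]
    exact hx
  have hy1ab := abs_lt.mp hy1
  set θ := Real.arccos (x / (2 * D)) with hθ
  have hcos : Real.cos θ = x / (2 * D) := Real.cos_arccos (by linarith [hy1ab.1]) (by linarith [hy1ab.2])
  have hxeq : x = 2 * D * Real.cos θ := by
    rw [hcos]; field_simp
  have hsin : Real.sin θ = Real.sqrt (1 - (x / (2 * D)) ^ 2) := by
    rw [hθ, Real.sin_arccos]
  have hsinpos : 0 < Real.sin θ := by
    rw [hsin]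
    apply Real.sqrt_pos.mpr
    nlinarith [hy1ab.1, hy1ab.2]
  -- key identity
  have key : ∀ n : ℕ, pRec (d : ℝ) n x * Real.sin θ =
      D ^ n * (Real.cos (n * θ) * Real.sin θ +
        (Real.cos θ + 1 / D) * Real.sin (n * θ)) := by
    intro n
    induction n using Nat.strong_induction_on with
    | _ n ih =>
      match n with
      | 0 => simp [pRec]
      | 1 =>
        simp only [pRec, Nat.cast_one, one_mul, pow_one]
        rw [hxeq]
        field_simp
        ring
      | (m + 2) =>
        have h1 := ih (m + 1) (by omega)
        have h0 := ih m (by omega)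
        show (x * pRec (d : ℝ) (m + 1) x - ((d : ℝ) - 1) * pRec (d : ℝ) m x) * Real.sin θ = _
        have e1 : ((m + 2 : ℕ) : ℝ) * θ = ((m + 1 : ℕ) : ℝ) * θ + θ := by push_cast; ring
        have e0 : ((m : ℕ) : ℝ) * θ = ((m + 1 : ℕ) : ℝ) * θ - θ := by push_cast; ring
        rw [sub_mul, mul_assoc, h1, mul_assoc, h0, hxeq, ← hD2, e1, Real.cos_add,
          Real.sin_add, e0, Real.cos_sub, Real.sin_sub]
        ring
  have hkey := key r
  have hDr : (0 : ℝ) ≤ D ^ r := pow_nonneg hDpos.le r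
  have h1Dpos : (0 : ℝ) < 1 / D := one_div_pos.mpr hDpos
  have hF : |Real.cos ((r : ℝ) * θ) * Real.sin θ + (Real.cos θ + 1 / D) * Real.sin ((r : ℝ) * θ)|
      ≤ (1 + (r : ℝ) / D + (r : ℝ)) * Real.sin θ := by
    have h1 := abs_add_le (Real.cos ((r : ℝ) * θ) * Real.sin θ)
      ((Real.cos θ + 1 / D) * Real.sin ((r : ℝ) * θ))
    rw [abs_mul, abs_mul, abs_of_pos hsinpos] at h1
    have hc2 : |Real.cos θ + 1 / D| ≤ 1 + 1 / D := by
      have := abs_add_le (Real.cos θ) (1 / D)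
      have hcc := Real.abs_cos_le_one θ
      have h1d : |1 / D| = 1 / D := abs_of_pos h1Dpos
      rw [h1d] at this
      linarith
    have hs : |Real.sin ((r : ℝ) * θ)| ≤ (r : ℝ) * Real.sin θ := by
      have := abs_sin_nat_mul_le θ r
      rwa [abs_of_pos hsinpos] at this
    have t1 : |Real.cos ((r : ℝ) * θ)| * Real.sin θ ≤ 1 * Real.sin θ :=
      mul_le_mul_of_nonneg_right (Real.abs_cos_le_one _) hsinpos.le
    have t2 : |Real.cos θ + 1 / D| * |Real.sin ((r : ℝ) * θ)| ≤
        (1 + 1 / D) * ((r : ℝ) * Real.sin θ) :=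
      mul_le_mul hc2 hs (abs_nonneg _) (by linarith)
    have teq : (1 : ℝ) * Real.sin θ + (1 + 1 / D) * ((r : ℝ) * Real.sin θ) =
        (1 + (r : ℝ) / D + (r : ℝ)) * Real.sin θ := by
      field_simp
      ring
    linarith
  have hfin : |pRec (d : ℝ) r x| * Real.sin θ ≤
      D ^ r * (1 + (r : ℝ) / D + (r : ℝ)) * Real.sin θ := by
    have e : |pRec (d : ℝ) r x| * Real.sin θ = |pRec (d : ℝ) r x * Real.sin θ| := by
      rw [abs_mul, abs_of_pos hsinpos]
    rw [e, hkey, abs_mul, abs_of_nonneg hDr, mul_assoc]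
    exact mul_le_mul_of_nonneg_left hF hDr
  exact le_of_mul_le_mul_right hfin hsinpos
end

section
/- Fix an integer $r \ge 1$ and positive reals $\delta^{(0)}, \dots, \delta^{(r)}$. Suppose $r$ is odd. For each $k \ge 1$, define $T_k = \sum \binom{2k-2}{2n_0, \dots, 2n_{(r-1)/2}} \prod_{j=0}^{(r-1)/2} C_{n_j} \left(\delta^{(j)}\delta^{(r-j)}\right)^{n_j}$, where the sum is over tuples of nonnegative integers $(n_0, \dots, n_{(r-1)/2})$ summing to $k-1$ and $C_n$ is the $n$-th Catalan number. Then $\limsup_{k\to\infty} T_k^{1/(2k)} \ge \sum_{j=0}^{r} \sqrt{\delta^{(j)}\delta^{(r-j)}}$. -/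
/-!
Averaging `(∑ⱼ ±xⱼ)^(2n)` over all `2^h` sign patterns keeps exactly the monomials with even
exponents, so for `x ≥ 0` the even multinomial sum `Eₙ(x)` lies between `2^(1-h) (∑ⱼ xⱼ)^(2n)` and
`(∑ⱼ xⱼ)^(2n)`. For `xⱼ = 2√(δ⁽ʲ⁾δ⁽ʳ⁻ʲ⁾)` one has `xⱼ^(2m) = 4^m (δ⁽ʲ⁾δ⁽ʳ⁻ʲ⁾)^m`, and
`4^m ≤ 2(n+1)² C_m`, `C_m ≤ 4^m` for `m ≤ n`, so `T_(n+1)` agrees with `Eₙ(x)` up to a factor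
polynomial in `n`, which disappears under `2k`-th roots. By the symmetry `j ↔ r - j`, `∑ⱼ xⱼ` is
the sum `∑_{j=0}^r √(δ⁽ʲ⁾δ⁽ʳ⁻ʲ⁾)`.
-/

open scoped Nat
open Finset

theorem four_pow_le_mul_catalan (n : ℕ) : 4 ^ n ≤ (2 * n + 1) * (n + 1) * catalan n := by
  rw [mul_assoc, succ_mul_catalan_eq_centralBinom, Nat.centralBinom_eq_two_mul_choose]
  exact Nat.four_pow_le_two_mul_add_one_mul_central_binom n

theorem catalan_le_four_pow (n : ℕ) : catalan n ≤ 4 ^ n :=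
  (Nat.le_mul_of_pos_left _ n.succ_pos).trans
    ((succ_mul_catalan_eq_centralBinom n).trans_le (Nat.centralBinom_le_four_pow n))

theorem four_pow_le_two_mul_sq_mul_catalan {m n : ℕ} (h : m ≤ n) :
    4 ^ m ≤ 2 * (n + 1) ^ 2 * catalan m := by
  refine (four_pow_le_mul_catalan m).trans (Nat.mul_le_mul_right _ ?_)
  nlinarith

section MultinomialSums

variable {ι : Type*} [Fintype ι] [DecidableEq ι]

noncomputable def evenMultinomialSum {R : Type*} [CommSemiring R] (x : ι → R) (n : ℕ) : R :=
  ∑ m ∈ piAntidiag univ n, (Nat.multinomial univ (fun j => 2 * m j) : R) * ∏ j, x j ^ (2 * m j)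

variable {R : Type*} [CommRing R]

theorem sum_bool_ite_one_neg_one_pow (k : ℕ) :
    ∑ b : Bool, (if b then (1 : R) else -1) ^ k = if Even k then 2 else 0 := by
  rcases Nat.even_or_odd k with hk | hk
  · simp [hk.neg_one_pow, hk, one_add_one_eq_two]
  · simp [hk.neg_one_pow, Nat.not_even_iff_odd.mpr hk]

theorem sum_signs_prod_pow (μ : ι → ℕ) :
    ∑ ε : ι → Bool, ∏ j, (if ε j then (1 : R) else -1) ^ μ j =
      if ∀ j, Even (μ j) then 2 ^ Fintype.card ι else 0 := by
  rw [← Fintype.prod_sum (fun j (b : Bool) => (if b then (1 : R) else -1) ^ μ j)]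
  simp_rw [sum_bool_ite_one_neg_one_pow]
  split_ifs with h
  · simp [h]
  · push Not at h
    obtain ⟨j, hj⟩ := h
    exact prod_eq_zero (mem_univ j) (if_neg hj)

theorem sum_piAntidiag_two_mul {M : Type*} [AddCommMonoid M] (g : (ι → ℕ) → M) (n : ℕ) :
    ∑ m ∈ piAntidiag univ n, g (fun j => 2 * m j) =
      ∑ μ ∈ piAntidiag univ (2 * n), if ∀ j, Even (μ j) then g μ else 0 := by
  refine sum_of_injOn (fun m j => 2 * m j) ?_ ?_ ?_ ?_
  · intro m _ m' _ h
    funext j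
    simpa using congrFun h j
  · intro m hm
    simp only [mem_coe, mem_piAntidiag, mem_univ, implies_true, and_true] at hm ⊢
    rw [← mul_sum, hm]
  · intro μ hμ hnot
    refine if_neg fun heven => hnot ⟨fun j => μ j / 2, ?_, ?_⟩
    · simp only [mem_coe, mem_piAntidiag, mem_univ, implies_true, and_true] at hμ ⊢
      have := sum_congr rfl fun j (_ : j ∈ univ) => Nat.two_mul_div_two_of_even (heven j)
      rw [← mul_sum, hμ] at this
      omega
    · funext j
      exact Nat.two_mul_div_two_of_even (heven j)
  · intro m _
    simp

theorem sum_signs_sum_pow_two_mul (x : ι → R) (n : ℕ) :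
    ∑ ε : ι → Bool, (∑ j, if ε j then x j else -x j) ^ (2 * n) =
      2 ^ Fintype.card ι * evenMultinomialSum x n := by
  have hsign : ∀ (ε : ι → Bool) j, (if ε j then x j else -x j) = (if ε j then 1 else -1) * x j :=
    fun ε j => by split_ifs <;> simp
  have hfactor : ∀ μ : ι → ℕ, ∑ ε : ι → Bool, (Nat.multinomial univ μ : R) *
      ((∏ j, (if ε j then (1 : R) else -1) ^ μ j) * ∏ j, x j ^ μ j) =
      if ∀ j, Even (μ j) then 2 ^ Fintype.card ι * ((Nat.multinomial univ μ : R) * ∏ j, x j ^ μ j)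
      else 0 := fun μ => by
    simp_rw [mul_left_comm (Nat.multinomial univ μ : R), ← sum_mul, sum_signs_prod_pow]
    split_ifs <;> ring
  simp_rw [hsign, sum_pow_eq_sum_piAntidiag, mul_pow, prod_mul_distrib]
  rw [sum_comm, sum_congr rfl fun μ _ => hfactor μ, evenMultinomialSum, mul_sum,
    sum_piAntidiag_two_mul fun μ =>
      2 ^ Fintype.card ι * ((Nat.multinomial univ μ : R) * ∏ j, x j ^ μ j)]

variable [LinearOrder R] [IsStrictOrderedRing R]

theorem two_mul_sum_pow_le_evenMultinomialSum [Nonempty ι] (x : ι → R) (n : ℕ) :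
    2 * (∑ j, x j) ^ (2 * n) ≤ 2 ^ Fintype.card ι * evenMultinomialSum x n := by
  rw [← sum_signs_sum_pow_two_mul]
  have hne : (fun _ : ι => true) ≠ fun _ => false := fun h => by
    simpa using congrFun h (Classical.arbitrary ι)
  calc 2 * (∑ j, x j) ^ (2 * n)
      = ∑ ε ∈ {fun _ => true, fun _ => false}, (∑ j, if ε j then x j else -x j) ^ (2 * n) := by
        rw [sum_pair hne]
        simp [sum_neg_distrib, two_mul]
    _ ≤ ∑ ε : ι → Bool, (∑ j, if ε j then x j else -x j) ^ (2 * n) :=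
        sum_le_sum_of_subset_of_nonneg (subset_univ _) fun _ _ _ => (even_two_mul n).pow_nonneg _

theorem evenMultinomialSum_le_sum_pow {x : ι → R} (hx : ∀ j, 0 ≤ x j) (n : ℕ) :
    evenMultinomialSum x n ≤ (∑ j, x j) ^ (2 * n) := by
  have hsign : ∀ ε : ι → Bool,
      (∑ j, if ε j then x j else -x j) ^ (2 * n) ≤ (∑ j, x j) ^ (2 * n) := by
    intro ε
    rw [← (even_two_mul n).pow_abs]
    refine pow_le_pow_left₀ (abs_nonneg _) ((abs_sum_le_sum_abs _ _).trans ?_) _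
    refine sum_le_sum fun j _ => ?_
    split_ifs <;> simp [abs_of_nonneg (hx j)]
  have := sum_le_sum fun ε (_ : ε ∈ univ) => hsign ε
  rw [sum_signs_sum_pow_two_mul, sum_const, card_univ, Fintype.card_fun, Fintype.card_bool,
    nsmul_eq_mul, Nat.cast_pow, Nat.cast_two] at this
  exact le_of_mul_le_mul_left this (by positivity)

noncomputable def catalanMultinomialSum (d : ι → ℝ) (n : ℕ) : ℝ :=
  ∑ m ∈ piAntidiag univ n,
    (Nat.multinomial univ (fun j => 2 * m j) : ℝ) * ∏ j, (catalan (m j) : ℝ) * d j ^ m j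

theorem two_mul_sqrt_pow_two_mul {d : ℝ} (hd : 0 ≤ d) (m : ℕ) :
    (2 * √d) ^ (2 * m) = 4 ^ m * d ^ m := by
  rw [pow_mul, mul_pow, Real.sq_sqrt hd, mul_pow]
  norm_num

variable {d : ι → ℝ}

theorem catalanMultinomialSum_le_evenMultinomialSum (hd : ∀ j, 0 ≤ d j) (n : ℕ) :
    catalanMultinomialSum d n ≤ evenMultinomialSum (fun j => 2 * √(d j)) n := by
  refine sum_le_sum fun m _ => mul_le_mul_of_nonneg_left ?_ (Nat.cast_nonneg _)
  refine prod_le_prod (fun j _ => mul_nonneg (Nat.cast_nonneg _) (pow_nonneg (hd j) _))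
    fun j _ => ?_
  rw [two_mul_sqrt_pow_two_mul (hd j)]
  gcongr
  · exact pow_nonneg (hd j) _
  · exact_mod_cast catalan_le_four_pow _

theorem evenMultinomialSum_le_mul_catalanMultinomialSum (hd : ∀ j, 0 ≤ d j) (n : ℕ) :
    evenMultinomialSum (fun j => 2 * √(d j)) n ≤
      (2 * (n + 1) ^ 2) ^ Fintype.card ι * catalanMultinomialSum d n := by
  rw [catalanMultinomialSum, mul_sum]
  refine sum_le_sum fun m hm => ?_
  have hmn : ∀ j, m j ≤ n := fun j => by
    rw [← (mem_piAntidiag.mp hm).1]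
    exact single_le_sum (fun i _ => Nat.zero_le (m i)) (mem_univ j)
  rw [mul_left_comm, ← card_univ, ← prod_const, ← prod_mul_distrib]
  refine mul_le_mul_of_nonneg_left (prod_le_prod (fun j _ => by positivity) fun j _ => ?_)
    (Nat.cast_nonneg _)
  rw [two_mul_sqrt_pow_two_mul (hd j), ← mul_assoc]
  gcongr
  · exact pow_nonneg (hd j) _
  · exact_mod_cast four_pow_le_two_mul_sq_mul_catalan (hmn j)

theorem catalanMultinomialSum_le_sum_pow (hd : ∀ j, 0 ≤ d j) (n : ℕ) :
    catalanMultinomialSum d n ≤ (∑ j, 2 * √(d j)) ^ (2 * n) :=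
  (catalanMultinomialSum_le_evenMultinomialSum hd n).trans
    (evenMultinomialSum_le_sum_pow (fun j => by positivity) n)

theorem two_mul_sum_pow_le_catalanMultinomialSum [Nonempty ι] (hd : ∀ j, 0 ≤ d j) (n : ℕ) :
    2 * (∑ j, 2 * √(d j)) ^ (2 * n) ≤
      2 ^ Fintype.card ι * (2 * (n + 1) ^ 2) ^ Fintype.card ι * catalanMultinomialSum d n := by
  rw [mul_assoc]
  exact (two_mul_sum_pow_le_evenMultinomialSum _ n).trans
    (mul_le_mul_of_nonneg_left (evenMultinomialSum_le_mul_catalanMultinomialSum hd n)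
      (by positivity))

theorem sum_pow_succ_le_mul_catalanMultinomialSum [Nonempty ι] (hd : ∀ j, 0 ≤ d j) (n : ℕ) :
    (∑ j, 2 * √(d j)) ^ (2 * (n + 1)) ≤
      (∑ j, 2 * √(d j)) ^ 2 * 4 ^ Fintype.card ι * (n + 1) ^ (2 * Fintype.card ι) *
        catalanMultinomialSum d n := by
  have h := two_mul_sum_pow_le_catalanMultinomialSum hd n
  have hpow : 0 ≤ (∑ j, 2 * √(d j)) ^ (2 * n) := (even_two_mul n).pow_nonneg _
  rw [mul_pow, ← pow_mul, ← mul_assoc, ← mul_pow, show (2 : ℝ) * 2 = 4 by norm_num] at h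
  rw [mul_add, mul_one, pow_add, mul_comm, mul_assoc, mul_assoc]
  gcongr
  linarith

end MultinomialSums

section GrowthRate

open Filter Topology

theorem tendsto_rpow_one_div_two_mul_natCast {C : ℝ} (hC : 0 < C) :
    Tendsto (fun k : ℕ => C ^ (1 / (2 * (k : ℝ)))) atTop (𝓝 1) := by
  have h : Tendsto (fun k : ℕ => 1 / (2 * (k : ℝ))) atTop (𝓝 0) := by
    simpa only [one_div, Pi.inv_def] using
      ((tendsto_natCast_atTop_atTop (R := ℝ)).const_mul_atTop two_pos).inv_tendsto_atTop
  simpa using tendsto_const_nhds.rpow h (Or.inl hC.ne')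

theorem tendsto_mul_pow_rpow_one_div_two_mul_natCast {C : ℝ} (hC : 0 < C) (a : ℕ) :
    Tendsto (fun k : ℕ => (C * (k : ℝ) ^ a) ^ (1 / (2 * (k : ℝ)))) atTop (𝓝 1) := by
  have hpow : Tendsto (fun k : ℕ => (k : ℝ) ^ ((a : ℝ) / (2 * k + 0))) atTop (𝓝 1) :=
    (tendsto_rpow_div_mul_add a 2 0 two_ne_zero.symm).comp tendsto_natCast_atTop_atTop
  have := (tendsto_rpow_one_div_two_mul_natCast hC).mul hpow
  rw [mul_one] at this
  refine this.congr' ?_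
  filter_upwards with k
  rw [Real.mul_rpow hC.le (by positivity), ← Real.rpow_natCast, ← Real.rpow_mul (Nat.cast_nonneg k),
    add_zero, mul_one_div]

theorem le_limsup_rpow_one_div_two_mul_of_bounds {f : ℕ → ℝ} {S C C' : ℝ} (hS : 0 < S)
    (hC : 0 < C) (hC' : 0 < C') (a : ℕ)
    (hlow : ∀ᶠ k : ℕ in atTop, S ^ (2 * k) ≤ C * (k : ℝ) ^ a * f k)
    (hup : ∀ᶠ k : ℕ in atTop, f k ≤ C' * S ^ (2 * k)) :
    S ≤ limsup (fun k : ℕ => f k ^ (1 / (2 * (k : ℝ)))) atTop := by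
  have hlower : Tendsto (fun k : ℕ => S / (C * (k : ℝ) ^ a) ^ (1 / (2 * (k : ℝ)))) atTop (𝓝 S) := by
    simpa [div_eq_mul_inv] using
      ((tendsto_mul_pow_rpow_one_div_two_mul_natCast hC a).inv₀ one_ne_zero).const_mul S
  have hupper : Tendsto (fun k : ℕ => C' ^ (1 / (2 * (k : ℝ))) * S) atTop (𝓝 S) := by
    simpa using (tendsto_rpow_one_div_two_mul_natCast hC').mul_const S
  have hroot : ∀ k : ℕ, 1 ≤ k → (S ^ (2 * k)) ^ (1 / (2 * (k : ℝ))) = S := fun k hk => by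
    rw [show 1 / (2 * (k : ℝ)) = ((2 * k : ℕ) : ℝ)⁻¹ by push_cast; ring]
    exact Real.pow_rpow_inv_natCast hS.le (by omega)
  have hle : ∀ᶠ k : ℕ in atTop,
      S / (C * (k : ℝ) ^ a) ^ (1 / (2 * (k : ℝ))) ≤ f k ^ (1 / (2 * (k : ℝ))) := by
    filter_upwards [hlow, eventually_ge_atTop 1] with k hk hk1
    have hpos : 0 < C * (k : ℝ) ^ a := by positivity
    rw [← hroot k hk1, ← Real.div_rpow (by positivity) hpos.le]
    exact Real.rpow_le_rpow (by positivity) ((div_le_iff₀' hpos).2 hk) (by positivity)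
  have hge : ∀ᶠ k : ℕ in atTop, f k ^ (1 / (2 * (k : ℝ))) ≤ C' ^ (1 / (2 * (k : ℝ))) * S := by
    filter_upwards [hlow, hup, eventually_ge_atTop 1] with k hk hk' hk1
    have hf : 0 < f k :=
      pos_of_mul_pos_right ((pow_pos hS _).trans_le hk) (by positivity)
    rw [← hroot k hk1, ← Real.mul_rpow hC'.le (by positivity)]
    exact Real.rpow_le_rpow hf.le hk' (by positivity)
  calc S = limsup (fun k : ℕ => S / (C * (k : ℝ) ^ a) ^ (1 / (2 * (k : ℝ)))) atTop :=
        hlower.limsup_eq.symm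
    _ ≤ limsup (fun k : ℕ => f k ^ (1 / (2 * (k : ℝ)))) atTop :=
        limsup_le_limsup hle hlower.isBoundedUnder_ge.isCoboundedUnder_le
          (hupper.isBoundedUnder_le.mono_le hge)

end GrowthRate

theorem sum_range_eq_two_nsmul_of_symm {M : Type*} [AddCommMonoid M] {f : ℕ → M} (p : ℕ)
    (hf : ∀ j ≤ 2 * p + 1, f (2 * p + 1 - j) = f j) :
    ∑ j ∈ range (2 * p + 1 + 1), f j = 2 • ∑ j ∈ range (p + 1), f j := by
  rw [show 2 * p + 1 + 1 = (p + 1) + (p + 1) by ring, sum_range_add, two_nsmul]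
  congr 1
  rw [← sum_range_reflect]
  refine sum_congr rfl fun j hj => ?_
  rw [← hf _ (by omega)]
  congr 1
  have := mem_range.mp hj
  omega

theorem stmt_19_general (r : ℕ) (hr : Odd r)
    (δ : ℕ → ℝ) (hδ : ∀ j ≤ r, 0 < δ j)
    (T : ℕ → ℝ)
    (hT : ∀ k : ℕ, 1 ≤ k →
      T k = ∑ m ∈ Finset.Nat.antidiagonalTuple ((r - 1) / 2 + 1) (k - 1),
        (Nat.multinomial Finset.univ (fun j => 2 * m j) : ℝ) *
          ∏ j : Fin ((r - 1) / 2 + 1),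
            (catalan (m j) : ℝ) * (δ (j : ℕ) * δ (r - (j : ℕ))) ^ (m j)) :
    ∑ j ∈ Finset.range (r + 1), Real.sqrt (δ j * δ (r - j)) ≤
      Filter.limsup (fun k : ℕ => T k ^ (1 / (2 * (k : ℝ)))) Filter.atTop := by
  obtain ⟨p, rfl⟩ := hr
  rw [show (2 * p + 1 - 1) / 2 = p by omega] at hT
  set d : Fin (p + 1) → ℝ := fun j => δ j * δ (2 * p + 1 - j)
  have hd : ∀ j, 0 < d j := fun j => mul_pos (hδ j (by omega)) (hδ _ (by omega))
  have hTd : ∀ n, T (n + 1) = catalanMultinomialSum d n := fun n => by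
    rw [hT _ n.succ_pos, catalanMultinomialSum, piAntidiag_univ_fin_eq_antidiagonalTuple]
    rfl
  have hS : ∑ j ∈ range (2 * p + 1 + 1), √(δ j * δ (2 * p + 1 - j)) = ∑ j, 2 * √(d j) := by
    rw [sum_range_eq_two_nsmul_of_symm p fun j hj => by rw [Nat.sub_sub_self hj, mul_comm],
      Fin.sum_univ_eq_sum_range (fun j => 2 * √(δ j * δ (2 * p + 1 - j))), ← mul_sum, two_nsmul]
    ring
  rw [hS]
  set S := ∑ j, 2 * √(d j)
  have hSpos : 0 < S :=
    sum_pos (fun j _ => mul_pos two_pos (Real.sqrt_pos.mpr (hd j))) univ_nonempty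
  refine le_limsup_rpow_one_div_two_mul_of_bounds hSpos (C := S ^ 2 * 4 ^ (p + 1))
    (C' := (S ^ 2)⁻¹) (by positivity) (by positivity) (2 * (p + 1)) ?_ ?_
  all_goals
    filter_upwards [Filter.eventually_ge_atTop 1] with k hk
    obtain ⟨n, rfl⟩ := Nat.exists_eq_add_of_le' hk
    rw [hTd]
  · simpa using sum_pow_succ_le_mul_catalanMultinomialSum (fun j => (hd j).le) n
  · rw [show (S ^ 2)⁻¹ * S ^ (2 * (n + 1)) = S ^ (2 * n) by field_simp; ring]
    exact catalanMultinomialSum_le_sum_pow (fun j => (hd j).le) n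

/-- **Exponential growth rate of the tree-like-walk count (odd `r`).** Fix an odd `r ≥ 1` and
positive reals `δ⁽⁰⁾, …, δ⁽ʳ⁾`.  For `k ≥ 1` let
`T_k = ∑ binom(2k-2; 2n₀,…,2n_{(r-1)/2}) ∏_j C_{n_j} (δ⁽ʲ⁾δ⁽ʳ⁻ʲ⁾)^{n_j}`,
the sum running over tuples of nonnegative integers summing to `k-1`, with `C_n` the `n`-th
Catalan number.  Then `limsup_k T_k^{1/(2k)} ≥ ∑_{j=0}^r √(δ⁽ʲ⁾δ⁽ʳ⁻ʲ⁾)`. -/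
theorem stmt_19 (r : ℕ) (hr : Odd r) (hr1 : 1 ≤ r)
    (δ : ℕ → ℝ) (hδ : ∀ j ≤ r, 0 < δ j)
    (T : ℕ → ℝ)
    (hT : ∀ k : ℕ, 1 ≤ k →
      T k = ∑ m ∈ Finset.Nat.antidiagonalTuple ((r - 1) / 2 + 1) (k - 1),
        (Nat.multinomial Finset.univ (fun j => 2 * m j) : ℝ) *
          ∏ j : Fin ((r - 1) / 2 + 1),
            (catalan (m j) : ℝ) * (δ (j : ℕ) * δ (r - (j : ℕ))) ^ (m j)) :
    ∑ j ∈ Finset.range (r + 1), Real.sqrt (δ j * δ (r - j)) ≤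
      Filter.limsup (fun k : ℕ => T k ^ (1 / (2 * (k : ℝ)))) Filter.atTop :=
  stmt_19_general r hr δ hδ T hT
end
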